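/- arXiv:1812.08867 — 12 statements merged into one kernel-verified Lean document; each statement's English description precedes it below -/
import Mathlib

section
/- Let β > 0, μ > 0, p ∈ (0,1). For all real S0 and all A > 0, the Dulac expression ∂/∂S0[(1/A)(μ - βS0A - μS0)] + ∂/∂A[(1/A)(β(1 - (1-p)S0 - A)A - μA)] equals -2β - μ/A, which is strictly negative. -/
open Filter

theorem deriv_one_div_mul_mul_self {𝕜 : Type*} [NontriviallyNormedField 𝕜] {r : 𝕜 → 𝕜} {x : 𝕜}
    (hx : x ≠ 0) : deriv (fun a => 1 / a * (r a * a)) x = deriv r x :=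
  EventuallyEq.deriv_eq <| by
    filter_upwards [eventually_ne_nhds hx] with a ha
    field_simp

theorem stmt_0_general (β μ p : ℝ) (hβ : 0 < β) (hμ : 0 < μ)
    (S0 : ℝ) (A : ℝ) (hA : 0 < A) :
    deriv (fun s : ℝ => (1 / A) * (μ - β * s * A - μ * s)) S0
      + deriv (fun a : ℝ => (1 / a) * (β * (1 - (1 - p) * S0 - a) * a - μ * a)) A
      = -2 * β - μ / A ∧ -2 * β - μ / A < 0 := by
  have hderiv_S0 : deriv (fun s : ℝ => (1 / A) * (μ - β * s * A - μ * s)) S0 = -β - μ / A := by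
    have affine : (fun s : ℝ => (1 / A) * (μ - β * s * A - μ * s))
        = fun s => μ / A - (β + μ / A) * s := by
      funext s
      field_simp
      ring
    rw [affine]
    simp only [deriv_const_sub', deriv_const_mul_id']
    ring
  -- `A` divides the second component of the field, so the Dulac factor `1 / A` cancels it.
  have hderiv_A : deriv (fun a : ℝ => (1 / a) * (β * (1 - (1 - p) * S0 - a) * a - μ * a)) A = -β := by
    have factored : (fun a : ℝ => (1 / a) * (β * (1 - (1 - p) * S0 - a) * a - μ * a))
        = fun a => 1 / a * ((β * (1 - (1 - p) * S0 - a) - μ) * a) := by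
      funext a
      ring
    rw [factored, deriv_one_div_mul_mul_self hA.ne']
    simp
  refine ⟨by rw [hderiv_S0, hderiv_A]; ring, ?_⟩
  have : 0 < μ / A := div_pos hμ hA
  linarith

/-- For the permanent adoption model with Dulac function 1/A, the Dulac
expression equals `-2β - μ/A`, which is strictly negative. -/
theorem stmt_0 (β μ p : ℝ) (hβ : 0 < β) (hμ : 0 < μ) (hp : p ∈ Set.Ioo (0:ℝ) 1)
    (S0 : ℝ) (A : ℝ) (hA : 0 < A) :
    deriv (fun s : ℝ => (1 / A) * (μ - β * s * A - μ * s)) S0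
      + deriv (fun a : ℝ => (1 / a) * (β * (1 - (1 - p) * S0 - a) * a - μ * a)) A
      = -2 * β - μ / A ∧ -2 * β - μ / A < 0 :=
  stmt_0_general β μ p hβ hμ S0 A hA
end

section
/- Let p ∈ (0,1) and δ > 0, and consider the set of A > 0 satisfying (1-p)/(δA + 1) + A = 1 - 1/δ. (I) If p < 1/2: this set is empty for δ < 4(1-p); it consists of exactly two distinct elements A₁ > A₂ > 0 for 4(1-p) < δ < 1/p; and it consists of exactly one element (namely A₁) for δ ≥ 1/p. (II) If p ≥ 1/2: this set is empty for δ ≤ 1/p, and consists of exactly one element A₁ for δ > 1/p. Here A₁ = (1/2)(1 - 2/δ + √(1 - 4(1-p)/δ)) and A₂ = (1/2)(1 - 2/δ - √(1 - 4(1-p)/δ)). -/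
set_option maxHeartbeats 1000000

lemma key_aux (p δ A : ℝ) (hδ : 0 < δ) (hA : 0 < A) :
    ((1-p)/(δ*A+1) + A = 1 - 1/δ) ↔ δ^2*A^2 + (2-δ)*(δ*A) + (1 - p*δ) = 0 := by
  have h1 : δ*A + 1 > 0 := by positivity
  have hδ0 : δ ≠ 0 := ne_of_gt hδ
  constructor
  · intro h
    field_simp at h
    linear_combination h
  · intro h
    field_simp
    linear_combination h

lemma fac_aux (p δ : ℝ) (hδ : 0 < δ) (hd : 4*(1-p) ≤ δ) (A : ℝ) :
    δ^2*A^2 + (2-δ)*(δ*A) + (1 - p*δ)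
      = δ^2 * (A - (1/2)*(1 - 2/δ + Real.sqrt (1 - 4*(1-p)/δ)))
            * (A - (1/2)*(1 - 2/δ - Real.sqrt (1 - 4*(1-p)/δ))) := by
  have hδ0 : δ ≠ 0 := ne_of_gt hδ
  have hnn : 0 ≤ 1 - 4*(1-p)/δ := by
    rw [sub_nonneg, div_le_one hδ]; exact hd
  have hs2 : (Real.sqrt (1 - 4*(1-p)/δ))^2 = 1 - 4*(1-p)/δ := Real.sq_sqrt hnn
  have hinv : δ * (1/δ) = 1 := mul_one_div_cancel hδ0
  linear_combination (δ^2/4) * hs2 + (-2*δ*A - δ*(1/δ) - 1 + p*δ) * hinv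

lemma mem_aux (p δ : ℝ) (hδ : 0 < δ) (hd : 4*(1-p) ≤ δ) (A : ℝ) (hA : 0 < A) :
    ((1-p)/(δ*A+1) + A = 1 - 1/δ) ↔
      (A = (1/2)*(1 - 2/δ + Real.sqrt (1 - 4*(1-p)/δ)) ∨
       A = (1/2)*(1 - 2/δ - Real.sqrt (1 - 4*(1-p)/δ))) := by
  rw [key_aux p δ A hδ hA, fac_aux p δ hδ hd A]
  constructor
  · intro h
    rcases mul_eq_zero.mp h with h | h
    · rcases mul_eq_zero.mp h with h | h
      · exact absurd h (by positivity)
      · exact Or.inl (by linarith [sub_eq_zero.mp h])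
    · exact Or.inr (by linarith [sub_eq_zero.mp h])
  · rintro (rfl | rfl) <;> ring

/-- classification of the set of positive endemic equilibria of the
permanent adoption model, according to the cases `p < 1/2` and `p ≥ 1/2`. -/
theorem stmt_4 (p δ : ℝ) (hp : p ∈ Set.Ioo (0:ℝ) 1) (hδ : 0 < δ) :
    let A₁ : ℝ := (1 / 2) * (1 - 2 / δ + Real.sqrt (1 - 4 * (1 - p) / δ))
    let A₂ : ℝ := (1 / 2) * (1 - 2 / δ - Real.sqrt (1 - 4 * (1 - p) / δ))
    let S : Set ℝ := {A : ℝ | 0 < A ∧ (1 - p) / (δ * A + 1) + A = 1 - 1 / δ}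
    (p < 1 / 2 →
      (δ < 4 * (1 - p) → S = ∅) ∧
      (4 * (1 - p) < δ → δ < 1 / p → S = {A₁, A₂} ∧ A₂ < A₁ ∧ 0 < A₂) ∧
      (1 / p ≤ δ → S = {A₁})) ∧
    (1 / 2 ≤ p →
      (δ ≤ 1 / p → S = ∅) ∧
      (1 / p < δ → S = {A₁})) := by
  intro A₁ A₂ S
  obtain ⟨hp0, hp1⟩ := hp
  have hδ0 : δ ≠ 0 := ne_of_gt hδ
  have hA₁ : A₁ = (1/2)*(1 - 2/δ + Real.sqrt (1 - 4*(1-p)/δ)) := rfl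
  have hA₂ : A₂ = (1/2)*(1 - 2/δ - Real.sqrt (1 - 4*(1-p)/δ)) := rfl
  have hS : S = {A : ℝ | 0 < A ∧ (1 - p) / (δ * A + 1) + A = 1 - 1 / δ} := rfl
  obtain ⟨s, hs_def, hs0⟩ : ∃ s : ℝ, s = Real.sqrt (1 - 4*(1-p)/δ) ∧ 0 ≤ s :=
    ⟨_, rfl, Real.sqrt_nonneg _⟩
  rw [← hs_def] at hA₁ hA₂
  clear_value A₁ A₂ S
  -- helper: discriminant identity (valid whenever 4(1-p) ≤ δ)
  have hd2aux : 4*(1-p) ≤ δ → s^2 = (1 - 2/δ)^2 + 4*(p*δ-1)/δ^2 := by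
    intro hd
    have hnn : 0 ≤ 1 - 4*(1-p)/δ := by rw [sub_nonneg, div_le_one hδ]; exact hd
    rw [hs_def, Real.sq_sqrt hnn]
    field_simp
    ring
  have memiff : ∀ (_ : 4*(1-p) ≤ δ) (A : ℝ), 0 < A →
      (((1 - p) / (δ * A + 1) + A = 1 - 1 / δ) ↔ (A = A₁ ∨ A = A₂)) := by
    intro hd A hA
    rw [hA₁, hA₂, hs_def]
    exact mem_aux p δ hδ hd A hA
  have hquart : 4*(1-p) ≤ 1/p := by
    rw [le_div_iff₀ hp0]; nlinarith [sq_nonneg (2*p-1)]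
  constructor
  · -- p < 1/2
    intro hphalf
    refine ⟨?_, ?_, ?_⟩
    · -- δ < 4(1-p) : empty
      intro hlt
      rw [hS]
      ext A
      simp only [Set.mem_setOf_eq, Set.mem_empty_iff_false, iff_false, not_and]
      intro hA heq
      have hQ := (key_aux p δ A hδ hA).mp heq
      nlinarith [sq_nonneg (2*δ*A + (2-δ)), mul_pos hδ (show (0:ℝ) < 4*(1-p) - δ by linarith)]
    · -- 4(1-p) < δ < 1/p : two roots
      intro h1 h2
      have hd : 4*(1-p) ≤ δ := le_of_lt h1
      have hd2 := hd2aux hd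
      have hpδ : p*δ < 1 := by
        rw [lt_div_iff₀ hp0] at h2; linarith
      have h2δ : 2/δ < 1 := by
        rw [div_lt_one hδ]; linarith
      have hneg : 4*(p*δ-1)/δ^2 < 0 :=
        div_neg_of_neg_of_pos (by linarith) (by positivity)
      have spos : 0 < s := by
        rw [hs_def]
        apply Real.sqrt_pos.mpr
        rw [sub_pos, div_lt_one hδ]; linarith
      have hA₂pos : 0 < A₂ := by
        rw [hA₂]; nlinarith [hd2, hs0, h2δ, hneg]
      have hlt : A₂ < A₁ := by rw [hA₁, hA₂]; linarith
      refine ⟨?_, hlt, hA₂pos⟩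
      rw [hS]
      ext A
      simp only [Set.mem_setOf_eq, Set.mem_insert_iff, Set.mem_singleton_iff]
      constructor
      · rintro ⟨hA, heq⟩
        exact (memiff hd A hA).mp heq
      · rintro (rfl | rfl)
        · exact ⟨by linarith, (memiff hd _ (by linarith)).mpr (Or.inl rfl)⟩
        · exact ⟨hA₂pos, (memiff hd _ hA₂pos).mpr (Or.inr rfl)⟩
    · -- δ ≥ 1/p : one root
      intro hge
      have hd : 4*(1-p) ≤ δ := le_trans hquart hge
      have hd2 := hd2aux hd
      have hpδ : 1 ≤ p*δ := by
        rw [div_le_iff₀ hp0] at hge; linarith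
      have h2δ : 2/δ < 1 := by
        rw [div_lt_one hδ]
        have : 2 < 1/p := by rw [lt_div_iff₀ hp0]; linarith
        linarith
      have hnn2 : 0 ≤ 4*(p*δ-1)/δ^2 := div_nonneg (by linarith) (by positivity)
      have hsge : 1 - 2/δ ≤ s := by nlinarith [hd2, hs0, h2δ, hnn2]
      have hA₁pos : 0 < A₁ := by rw [hA₁]; linarith
      have hA₂np : A₂ ≤ 0 := by rw [hA₂]; linarith
      rw [hS]
      ext A
      simp only [Set.mem_setOf_eq, Set.mem_singleton_iff]
      constructor
      · rintro ⟨hA, heq⟩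
        rcases (memiff hd A hA).mp heq with h | h
        · exact h
        · exact absurd (h ▸ hA) (by rw [hA₂]; push_neg; linarith)
      · rintro rfl
        exact ⟨hA₁pos, (memiff hd _ hA₁pos).mpr (Or.inl rfl)⟩
  · -- p ≥ 1/2
    intro hphalf
    constructor
    · -- δ ≤ 1/p : empty
      intro hle
      have hpδ : p*δ ≤ 1 := by
        rw [le_div_iff₀ hp0] at hle; linarith
      have hδ2 : δ ≤ 2 := by
        have : 1/p ≤ 2 := by rw [div_le_iff₀ hp0]; linarith
        linarith
      rw [hS]
      ext A
      simp only [Set.mem_setOf_eq, Set.mem_empty_iff_false, iff_false, not_and]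
      intro hA heq
      have hQ := (key_aux p δ A hδ hA).mp heq
      nlinarith [mul_pos (mul_pos hδ hδ) (mul_pos hA hA),
        mul_nonneg (mul_nonneg (show (0:ℝ) ≤ 2-δ by linarith) hδ.le) hA.le]
    · -- δ > 1/p : one root
      intro hgt
      have hd : 4*(1-p) ≤ δ := le_trans hquart hgt.le
      have hd2 := hd2aux hd
      have hpδ : 1 < p*δ := by
        rw [div_lt_iff₀ hp0] at hgt; linarith
      have hpos2 : 0 < 4*(p*δ-1)/δ^2 := div_pos (by linarith) (by positivity)
      have hsgt : 2/δ - 1 < s := by nlinarith [hd2, hs0, hpos2]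
      have hsgt2 : 1 - 2/δ < s := by nlinarith [hd2, hs0, hpos2]
      have hA₁pos : 0 < A₁ := by rw [hA₁]; linarith
      have hA₂np : A₂ ≤ 0 := by rw [hA₂]; linarith
      rw [hS]
      ext A
      simp only [Set.mem_setOf_eq, Set.mem_singleton_iff]
      constructor
      · rintro ⟨hA, heq⟩
        rcases (memiff hd A hA).mp heq with h | h
        · exact h
        · exact absurd (h ▸ hA) (by rw [hA₂]; push_neg; linarith)
      · rintro rfl
        exact ⟨hA₁pos, (memiff hd _ hA₁pos).mpr (Or.inl rfl)⟩
end

section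
/- Let β > 0, μ > 0, p ∈ (0,1), δ = β/μ, and suppose A > 0 and S0 satisfy S0 = 1/(δA+1) and (1-p)S0 + A = 1 - 1/δ. Then the Jacobian matrix J = [[-βA - μ, -βS0],[-β(1-p)A, β(1 - (1-p)S0) - 2βA - μ]] satisfies tr(J) = -2βA - μ < 0 and det(J) = β²A(2A + 2/δ - 1). -/
/-- trace and determinant of the Jacobian of the permanent adoption model
at an endemic equilibrium. -/
theorem stmt_6 (β μ p δ S0 A : ℝ) (hβ : 0 < β) (hμ : 0 < μ) (hp : p ∈ Set.Ioo (0:ℝ) 1)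
    (hδ : δ = β / μ) (hA : 0 < A)
    (hS0 : S0 = 1 / (δ * A + 1)) (heq : (1 - p) * S0 + A = 1 - 1 / δ) :
    let J : Matrix (Fin 2) (Fin 2) ℝ :=
      !![-β * A - μ, -β * S0;
         -β * (1 - p) * A, β * (1 - (1 - p) * S0) - 2 * β * A - μ]
    Matrix.trace J = -2 * β * A - μ ∧ -2 * β * A - μ < 0 ∧
    J.det = β ^ 2 * A * (2 * A + 2 / δ - 1) := by
  intro J
  have hδpos : 0 < δ := hδ ▸ div_pos hβ hμ
  have hδne : δ ≠ 0 := ne_of_gt hδpos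
  have hps : (1 - p) * S0 = 1 - 1 / δ - A := by linarith
  have hβδ : β / δ = μ := by rw [hδ]; field_simp
  refine ⟨?_, by nlinarith, ?_⟩
  · simp [J, Matrix.trace_fin_two]
    have : β * (1 - (1 - p) * S0) = β * (1 / δ + A) := by rw [hps]; ring
    rw [this]
    have : β * (1 / δ) = μ := by rw [mul_one_div]; exact hβδ
    nlinarith [this]
  · have h1 : μ = β * (1 / δ) := by rw [mul_one_div]; exact hβδ.symm
    have key : (-β*A - μ) * (β*(1-(1-p)*S0) - 2*β*A - μ) - (-β*S0)*(-β*(1-p)*A)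
        = β^2*A*(2*A+2/δ-1) := by
      have h2 : (-β*S0)*(-β*(1-p)*A) = β*A*(β*((1-p)*S0)) := by ring
      rw [h2, hps, h1]
      field_simp
      ring
    simpa [J, Matrix.det_fin_two] using key
end

section
/- Let β > 0, μ > 0, p ∈ (0,1), δ = β/μ with δ > 4(1-p), and let A₁ = (1/2)(1 - 2/δ + √(1 - 4(1-p)/δ)), S0 = 1/(δA₁ + 1). If A₁ > 0, then 2(A₁ + 1/δ) > 1, and consequently the Jacobian matrix [[-βA₁ - μ, -βS0],[-β(1-p)A₁, β(1 - (1-p)S0) - 2βA₁ - μ]] has positive determinant, negative trace, and every (complex) eigenvalue of it has negative real part. -/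
lemma spec_quad (a b c d : ℝ) (z : ℂ)
    (hz : z ∈ spectrum ℂ ((!![a, b; c, d] : Matrix (Fin 2) (Fin 2) ℝ).map Complex.ofReal)) :
    (z - a) * (z - d) - b * c = 0 := by
  rw [spectrum.mem_iff, Matrix.isUnit_iff_isUnit_det, isUnit_iff_ne_zero, ne_eq, not_not,
    Matrix.det_fin_two] at hz
  simp [Matrix.algebraMap_matrix_apply, Algebra.algebraMap_self_apply] at hz
  linear_combination hz

lemma re_neg_of_quad (B D : ℝ) (hB : 0 < B) (hD : 0 < D) (z : ℂ)
    (h : z ^ 2 + (B : ℂ) * z + (D : ℂ) = 0) : z.re < 0 := by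
  have h2 : z * z + (B : ℂ) * z + (D : ℂ) = 0 := by linear_combination h
  rw [Complex.ext_iff] at h2
  obtain ⟨hre, him⟩ := h2
  simp only [Complex.add_re, Complex.mul_re, Complex.mul_im, Complex.add_im,
    Complex.ofReal_re, Complex.ofReal_im, Complex.zero_re, Complex.zero_im] at hre him
  by_contra hx
  push_neg at hx
  have hy : z.im * (2 * z.re + B) = 0 := by nlinarith [him]
  rcases mul_eq_zero.mp hy with hy0 | hy1
  · nlinarith
  · nlinarith

/-- if the endemic level `A₁` of the permanent adoption model is positive,
then `2(A₁ + 1/δ) > 1`, and the Jacobian at the corresponding equilibrium has positive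
determinant, negative trace, and all its (complex) eigenvalues have negative real part. -/
theorem stmt_7 (β μ p δ : ℝ) (hβ : 0 < β) (hμ : 0 < μ) (hp : p ∈ Set.Ioo (0:ℝ) 1)
    (hδeq : δ = β / μ) (hδ : 4 * (1 - p) < δ) :
    let A₁ : ℝ := (1 / 2) * (1 - 2 / δ + Real.sqrt (1 - 4 * (1 - p) / δ))
    let S0 : ℝ := 1 / (δ * A₁ + 1)
    let J : Matrix (Fin 2) (Fin 2) ℝ :=
      !![-β * A₁ - μ, -β * S0;
         -β * (1 - p) * A₁, β * (1 - (1 - p) * S0) - 2 * β * A₁ - μ]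
    0 < A₁ →
      1 < 2 * (A₁ + 1 / δ) ∧ 0 < J.det ∧ Matrix.trace J < 0 ∧
      ∀ z ∈ spectrum ℂ (J.map Complex.ofReal), z.re < 0 := by
  intro A₁ S0 J hA
  have hp1 : 0 < 1 - p := by linarith [hp.2]
  have hδ0 : 0 < δ := by linarith
  have harg : 0 < 1 - 4 * (1 - p) / δ := by
    have : 4 * (1 - p) / δ < 1 := (div_lt_one hδ0).mpr hδ
    linarith
  set s : ℝ := Real.sqrt (1 - 4 * (1 - p) / δ) with hsdef
  have hs0 : 0 < s := Real.sqrt_pos.mpr harg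
  have hs2 : s ^ 2 = 1 - 4 * (1 - p) / δ := Real.sq_sqrt harg.le
  have hA₁def : A₁ = (1 / 2) * (1 - 2 / δ + s) := rfl
  have hS0def : S0 = 1 / (δ * A₁ + 1) := rfl
  have hJdef : J = !![-β * A₁ - μ, -β * S0;
      -β * (1 - p) * A₁, β * (1 - (1 - p) * S0) - 2 * β * A₁ - μ] := rfl
  clear_value s A₁ S0 J
  have hsA : 2 * A₁ = 1 - 2 / δ + s := by rw [hA₁def]; ring
  have hse : s = 2 * A₁ + 2 / δ - 1 := by linarith
  have hden : 0 < δ * A₁ + 1 := by positivity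
  have h2 : 2 * δ * A₁ - (δ - 2) = δ * s := by
    rw [hA₁def]; field_simp; ring
  have h3 : (2 * δ * A₁ - (δ - 2)) ^ 2 = δ ^ 2 - 4 * (1 - p) * δ := by
    rw [h2, mul_pow, hs2]; field_simp
  have heqδ : δ ^ 2 * A₁ ^ 2 - δ * (δ - 2) * A₁ + 1 - p * δ = 0 := by
    linear_combination h3 / 4
  have hS0e : (1 - p) * S0 = 1 - A₁ - 1 / δ := by
    rw [hS0def]; field_simp; linear_combination heqδ
  have hμβ : β / δ = μ := by rw [hδeq]; field_simp
  have hdet : J.det = β ^ 2 * A₁ * s := by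
    rw [hJdef, Matrix.det_fin_two_of]
    linear_combination (β * μ) * hS0e - (β ^ 2 * A₁) * hse - (μ + 2 * β * A₁) * hμβ
  have htr : Matrix.trace J = -(2 * β * A₁) - μ := by
    rw [hJdef, Matrix.trace_fin_two_of]
    linear_combination hμβ - β * hS0e
  have hpart1 : 2 * (A₁ + 1 / δ) = 1 + s := by rw [hA₁def]; ring
  refine ⟨by linarith, by rw [hdet]; positivity, by rw [htr]; nlinarith, ?_⟩
  intro z hz
  rw [hJdef] at hz
  have hq := spec_quad _ _ _ _ z hz
  have hS0C := congrArg (Complex.ofReal) hS0e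
  have hseC := congrArg (Complex.ofReal) hse
  have hμβC := congrArg (Complex.ofReal) hμβ
  push_cast at hS0C hseC hμβC hq
  have hquad : z ^ 2 + ((2 * β * A₁ + μ : ℝ) : ℂ) * z + ((β ^ 2 * A₁ * s : ℝ) : ℂ) = 0 := by
    push_cast
    linear_combination hq + z * hμβC - (β : ℂ) * z * hS0C - (β : ℂ) * μ * hS0C +
      (β : ℂ) ^ 2 * A₁ * hseC + ((μ : ℂ) + 2 * β * A₁) * hμβC
  exact re_neg_of_quad _ _ (by nlinarith) (by positivity) z hquad
end

section
/- Let β > 0, μ > 0, p ∈ (0,1/2), δ = β/μ with 4(1-p) < δ < 1/p, and let A₂ = (1/2)(1 - 2/δ - √(1 - 4(1-p)/δ)), S0 = 1/(δA₂ + 1). Then A₂ > 0, 2(A₂ + 1/δ) < 1, and consequently the Jacobian matrix [[-βA₂ - μ, -βS0],[-β(1-p)A₂, β(1 - (1-p)S0) - 2βA₂ - μ]] has negative determinant and hence has a positive real eigenvalue; in particular the equilibrium E₂ is linearly unstable. -/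
private lemma pos_root (T D s : ℝ) (hD : D < 0) (hs : s ^ 2 = T ^ 2 - 4 * D)
    (hs0 : 0 ≤ s) : 0 < (T + s) / 2 := by
  nlinarith [hs, hs0, hD, sq_nonneg (T + s)]

private lemma quad_root (a d q s : ℝ) (hs : s ^ 2 = (a + d) ^ 2 - 4 * (a * d - q)) :
    (((a + d) + s) / 2 - a) * (((a + d) + s) / 2 - d) - q = 0 := by
  linear_combination (1/4 : ℝ) * hs

/-- for `p ∈ (0,1/2)` and `4(1-p) < δ < 1/p`, the endemic level `A₂`
of the permanent adoption model is positive, `2(A₂ + 1/δ) < 1`, and the Jacobian at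
the corresponding equilibrium has negative determinant and hence a positive real
eigenvalue, so the equilibrium `E₂` is linearly unstable. -/
theorem stmt_8 (β μ p δ : ℝ) (hβ : 0 < β) (hμ : 0 < μ) (hp : p ∈ Set.Ioo (0:ℝ) (1/2))
    (hδeq : δ = β / μ) (hδ₁ : 4 * (1 - p) < δ) (hδ₂ : δ < 1 / p) :
    let A₂ : ℝ := (1 / 2) * (1 - 2 / δ - Real.sqrt (1 - 4 * (1 - p) / δ))
    let S0 : ℝ := 1 / (δ * A₂ + 1)
    let J : Matrix (Fin 2) (Fin 2) ℝ :=
      !![-β * A₂ - μ, -β * S0;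
         -β * (1 - p) * A₂, β * (1 - (1 - p) * S0) - 2 * β * A₂ - μ]
    0 < A₂ ∧ 2 * (A₂ + 1 / δ) < 1 ∧ J.det < 0 ∧
      ∃ t : ℝ, 0 < t ∧ t ∈ spectrum ℝ J := by
  intro A₂ S0 J
  obtain ⟨hp0, hp2⟩ := hp
  have hδpos : 0 < δ := by linarith
  have hδne : δ ≠ 0 := hδpos.ne'
  have hpδ : δ * p < 1 := (lt_div_iff₀ hp0).mp hδ₂
  set r : ℝ := Real.sqrt (1 - 4 * (1 - p) / δ) with hrdef
  have hA2 : A₂ = (1 / 2) * (1 - 2 / δ - r) := rfl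
  have hS0 : S0 = 1 / (δ * A₂ + 1) := rfl
  have hJ : J = !![-β * A₂ - μ, -β * S0;
      -β * (1 - p) * A₂, β * (1 - (1 - p) * S0) - 2 * β * A₂ - μ] := rfl
  clear_value J S0 A₂
  have harg : 0 < 1 - 4 * (1 - p) / δ := by
    rw [sub_pos, div_lt_one hδpos]; linarith
  have hr_pos : 0 < r := Real.sqrt_pos.mpr harg
  have hr_sq : r ^ 2 = 1 - 4 * (1 - p) / δ := Real.sq_sqrt harg.le
  have hδr2 : (δ * r) ^ 2 = δ ^ 2 - 4 * (1 - p) * δ := by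
    rw [mul_pow, hr_sq]; field_simp
  -- δ r < δ - 2
  have hdr : δ * r < δ - 2 := by
    have h1 : (δ * r) ^ 2 < (δ - 2) ^ 2 := by
      rw [hδr2]; nlinarith
    nlinarith [mul_pos hδpos hr_pos]
  have hrl : 2 / δ < 1 - r := by
    rw [div_lt_iff₀ hδpos]; nlinarith
  have hA2pos : 0 < A₂ := by rw [hA2]; linarith
  have hsum : 2 * (A₂ + 1 / δ) = 1 - r := by rw [hA2]; field_simp; ring
  have hpart2 : 2 * (A₂ + 1 / δ) < 1 := by rw [hsum]; linarith
  -- key inequality δ - 4(1-p) < δ r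
  have hkr : δ - 4 * (1 - p) < δ * r := by
    nlinarith [hδr2, mul_pos hδpos hr_pos, sq_nonneg (δ * r - (δ - 4 * (1 - p)))]
  have hd : 0 < δ * A₂ + 1 := by nlinarith [mul_pos hδpos hA2pos]
  have hβμ : β = δ * μ := by rw [hδeq]; field_simp
  have hA2δ : 2 * (δ * A₂) = δ - 2 - δ * r := by
    rw [hA2]; field_simp
  -- quadratic equation satisfied by A₂ (cleared of denominators)
  have hq' : δ ^ 2 * A₂ ^ 2 - δ * (δ - 2) * A₂ + (1 - p * δ) = 0 := by
    linear_combination ((δ * A₂ + (δ - 2 - δ * r) / 2 - (δ - 2)) / 2) * hA2δ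
      + (1/4 : ℝ) * hδr2
  have hSd : S0 * (δ * A₂ + 1) = 1 := by
    rw [hS0]; field_simp
  -- equilibrium relation
  have h_eq' : β * (1 - (1 - p) * S0 - A₂) * (δ * A₂ + 1) = μ * (δ * A₂ + 1) := by
    rw [hβμ]
    linear_combination (-(δ * μ * (1 - p))) * hSd + (-μ) * hq'
  have h_eq : β * (1 - (1 - p) * S0 - A₂) = μ := mul_right_cancel₀ hd.ne' h_eq'
  have h22 : β * (1 - (1 - p) * S0) - 2 * β * A₂ - μ = -β * A₂ := by
    linear_combination h_eq
  have hdet : J.det = (-β * A₂ - μ) * (β * (1 - (1 - p) * S0) - 2 * β * A₂ - μ)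
      - (-β * S0) * (-β * (1 - p) * A₂) := by rw [hJ, Matrix.det_fin_two_of]
  have hA2' : δ * A₂ + 1 = (δ - δ * r) / 2 := by linarith
  have hδ2r2 : δ ^ 2 * r ^ 2 = δ ^ 2 - 4 * (1 - p) * δ := by linear_combination hδr2
  have hmul : δ * (δ - 4 * (1 - p)) < δ * (δ * r) := mul_lt_mul_of_pos_left hkr hδpos
  have key : (δ * A₂ + 1) ^ 2 < δ * (1 - p) := by
    rw [hA2']
    linarith [hδ2r2, hmul]
  have h5 : β * A₂ + μ < β * (1 - p) * S0 := by
    rw [hS0, mul_one_div, lt_div_iff₀ hd, hβμ]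
    linarith [mul_lt_mul_of_pos_left key hμ]
  have hDneg : J.det < 0 := by
    rw [hdet, h22]
    have hrw : (-β * A₂ - μ) * (-β * A₂) - (-β * S0) * (-β * (1 - p) * A₂)
        = β * A₂ * ((β * A₂ + μ) - β * (1 - p) * S0) := by ring
    rw [hrw]
    have hβA : 0 < β * A₂ := mul_pos hβ hA2pos
    exact mul_neg_of_pos_of_neg hβA (by linarith)
  refine ⟨hA2pos, hpart2, hDneg, ?_⟩
  -- eigenvalue
  set a : ℝ := -β * A₂ - μ with ha
  set dd : ℝ := β * (1 - (1 - p) * S0) - 2 * β * A₂ - μ with hdd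
  set q : ℝ := (-β * S0) * (-β * (1 - p) * A₂) with hqdef
  have hD : J.det = a * dd - q := hdet
  have hadq : a * dd - q < 0 := by rw [← hD]; exact hDneg
  have hdisc : 0 < (a + dd) ^ 2 - 4 * (a * dd - q) := by
    linarith [sq_nonneg (a + dd), hadq]
  set s : ℝ := Real.sqrt ((a + dd) ^ 2 - 4 * (a * dd - q)) with hsdef
  have hs : s ^ 2 = (a + dd) ^ 2 - 4 * (a * dd - q) := Real.sq_sqrt hdisc.le
  have hs0 : 0 ≤ s := Real.sqrt_nonneg _
  set t : ℝ := ((a + dd) + s) / 2 with htdef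
  have ht : 0 < t := pos_root (a + dd) (a * dd - q) s hadq hs hs0
  refine ⟨t, ht, ?_⟩
  rw [spectrum.mem_iff]
  intro hUnit
  rw [Matrix.isUnit_iff_isUnit_det, isUnit_iff_ne_zero] at hUnit
  apply hUnit
  have hM : (algebraMap ℝ (Matrix (Fin 2) (Fin 2) ℝ)) t - J
      = !![t - a, β * S0; β * (1 - p) * A₂, t - dd] := by
    rw [hJ]
    ext i j
    fin_cases i <;> fin_cases j <;>
      simp [Matrix.algebraMap_matrix_apply, ha, hdd] <;> ring
  rw [hM, Matrix.det_fin_two_of]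
  have hqr := quad_root a dd q s hs
  rw [← htdef] at hqr
  calc (t - a) * (t - dd) - β * S0 * (β * (1 - p) * A₂)
      = (t - a) * (t - dd) - q := by rw [hqdef]; ring
    _ = 0 := hqr
end

section
/- Let p ∈ (0,1) and define, for δ ≥ 4(1-p), the function S₁(δ) = 1/δ - p(1 - √(1 - 4(1-p)/δ))/(2(1-p)). Then for all δ ≥ 4(1-p) one has S₁(δ) ≤ (1-p)/4, with equality if and only if δ = 4/(p+1); moreover 4/(p+1) ≥ 4(1-p), so the maximizer lies in the domain. -/
/-!
Write `s = √(1 - 4(1-p)/δ)`, so that `1/δ = (1 - s²)/(4(1-p))`. Substituting this into `S₁(δ)`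
gives `S₁(δ) - (1-p)/4 = -(s - p)²/(4(1-p))`, which is nonpositive and vanishes exactly when
`s = p`, i.e. when `δ = 4/(p+1)`.
-/

open Real

/-- The paper's `S₁(δ)`. -/
noncomputable def endemicInformedFraction (p δ : ℝ) : ℝ :=
  1 / δ - p * (1 - √(1 - 4 * (1 - p) / δ)) / (2 * (1 - p))

theorem endemicInformedFraction_sub_eq {p δ : ℝ} (hp : p < 1) (hδ : 4 * (1 - p) ≤ δ) :
    endemicInformedFraction p δ - (1 - p) / 4
      = -(√(1 - 4 * (1 - p) / δ) - p) ^ 2 / (4 * (1 - p)) := by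
  have hq : 0 < 1 - p := by linarith
  have hδ₀ : 0 < δ := by linarith
  have hrad : 0 ≤ 1 - 4 * (1 - p) / δ := by
    rw [sub_nonneg, div_le_one hδ₀]; exact hδ
  rw [endemicInformedFraction]
  have hs := sq_sqrt hrad
  generalize √(1 - 4 * (1 - p) / δ) = s at hs ⊢
  have hinv : 1 / δ = (1 - s ^ 2) / (4 * (1 - p)) := by
    rw [hs]; field_simp; ring
  rw [hinv]
  field_simp
  ring

theorem sqrt_one_sub_div_eq_self_iff {p δ : ℝ} (hp₀ : 0 < p) (hp₁ : p ≠ 1) (hδ : δ ≠ 0) :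
    √(1 - 4 * (1 - p) / δ) = p ↔ δ = 4 / (p + 1) := by
  have hq : 1 - p ≠ 0 := sub_ne_zero.2 hp₁.symm
  have hp₂ : p + 1 ≠ 0 := by linarith
  rw [sqrt_eq_iff_mul_self_eq_of_pos hp₀, eq_div_iff hp₂]
  constructor <;> intro h
  · field_simp at h
    apply mul_left_cancel₀ hq
    linear_combination -h
  · field_simp
    linear_combination (p - 1) * h

theorem four_mul_one_sub_le_four_div {p : ℝ} (hp : -1 < p) : 4 * (1 - p) ≤ 4 / (p + 1) := by
  rw [le_div_iff₀ (by linarith)]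
  nlinarith [sq_nonneg p]

/-- the fraction of informed individuals `S₁(δ)` at the stable endemic
equilibrium of the permanent adoption model is at most `(1-p)/4` on its domain
`δ ≥ 4(1-p)`, with equality exactly at `δ = 4/(p+1)`, which lies in the domain. -/
theorem stmt_9 (p : ℝ) (hp : p ∈ Set.Ioo (0:ℝ) 1) :
    let S₁ : ℝ → ℝ := fun δ =>
      1 / δ - p * (1 - Real.sqrt (1 - 4 * (1 - p) / δ)) / (2 * (1 - p))
    (∀ δ : ℝ, 4 * (1 - p) ≤ δ → S₁ δ ≤ (1 - p) / 4) ∧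
    (∀ δ : ℝ, 4 * (1 - p) ≤ δ → (S₁ δ = (1 - p) / 4 ↔ δ = 4 / (p + 1))) ∧
    4 * (1 - p) ≤ 4 / (p + 1) := by
  obtain ⟨hp₀, hp₁⟩ := hp
  have hq : 0 < 4 * (1 - p) := by linarith
  refine ⟨fun δ hδ => ?_, fun δ hδ => ?_, four_mul_one_sub_le_four_div (by linarith)⟩
  · have key := endemicInformedFraction_sub_eq hp₁ hδ
    have : -(√(1 - 4 * (1 - p) / δ) - p) ^ 2 / (4 * (1 - p)) ≤ 0 :=
      div_nonpos_of_nonpos_of_nonneg (neg_nonpos.2 (sq_nonneg _)) hq.le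
    change endemicInformedFraction p δ ≤ _
    linarith
  · change endemicInformedFraction p δ = _ ↔ _
    rw [← sub_eq_zero, endemicInformedFraction_sub_eq hp₁ hδ, div_eq_zero_iff, neg_eq_zero,
      or_iff_left hq.ne', sq_eq_zero_iff, sub_eq_zero,
      sqrt_one_sub_div_eq_self_iff hp₀ hp₁.ne (by linarith)]
end

section
/- Let β > 0, μ > 0, γ > 0, p ∈ (0,1), δ = β/(γ+μ). Suppose (S0, S1, A, R) satisfies μ - βS0A - μS0 = 0, (1-p)βS0A - βS1A - μS1 = 0, β(pS0 + S1)A - (γ+μ)A = 0, γA - μR = 0, with A ≠ 0. Then S0 = 1/(δ(γ/μ + 1)A + 1), S1 = (1-p)δ(γ/μ + 1)A/(δ(γ/μ + 1)A + 1)², R = (γ/μ)A, pS0 + S1 = 1/δ, and moreover δ ≥ 4(1-p) and A = (1/2)(1 + γ/μ)⁻¹(1 - 2/δ + √(1 - 4(1-p)/δ)) or A = (1/2)(1 + γ/μ)⁻¹(1 - 2/δ - √(1 - 4(1-p)/δ)). -/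
/-!
Writing `x = (β/μ) A`, the first two equilibrium equations give `S₀ = 1/(x+1)` and
`S₁ = (1-p) x/(x+1)²`, while the third, divided by `A ≠ 0`, gives `p S₀ + S₁ = 1/δ`.
Substituting, `y = x + 1` is a root of `y² - δ y + δ (1-p)`, whose discriminant
`δ² - 4 δ (1-p)` must therefore be nonnegative; solving for `y` and using
`β/μ = δ (γ/μ + 1)` gives the two candidate values of `A`.
-/

namespace TemporaryAdoption

variable {β μ γ p δ S0 S1 A R : ℝ}

theorem contact_mul_eq_div (hμ : μ ≠ 0) (hδ : δ = β / (γ + μ)) (hγμ : γ + μ ≠ 0) :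
    δ * (γ / μ + 1) = β / μ := by
  rw [hδ]
  field_simp

theorem S0_mul_eq_one (hμ : μ ≠ 0) (h1 : μ - β * S0 * A - μ * S0 = 0) :
    S0 * (β / μ * A + 1) = 1 := by
  field_simp
  linear_combination -h1

theorem S0_eq (hμ : μ ≠ 0) (h1 : μ - β * S0 * A - μ * S0 = 0) :
    S0 = 1 / (β / μ * A + 1) :=
  eq_one_div_of_mul_eq_one_left (S0_mul_eq_one hμ h1)

theorem S1_eq (hμ : μ ≠ 0) (h1 : μ - β * S0 * A - μ * S0 = 0)
    (h2 : (1 - p) * β * S0 * A - β * S1 * A - μ * S1 = 0) :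
    S1 = (1 - p) * (β / μ * A) / (β / μ * A + 1) ^ 2 := by
  have hx : β / μ * A + 1 ≠ 0 := right_ne_zero_of_mul_eq_one (S0_mul_eq_one hμ h1)
  rw [eq_div_iff (pow_ne_zero 2 hx)]
  have hS1 : S1 * (β / μ * A + 1) = (1 - p) * (β / μ) * S0 * A := by
    field_simp
    linear_combination -h2
  linear_combination (β / μ * A + 1) * hS1 + (1 - p) * (β / μ) * A * S0_mul_eq_one hμ h1

theorem R_eq (hμ : μ ≠ 0) (h4 : γ * A - μ * R = 0) : R = γ / μ * A := by
  field_simp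
  linear_combination -h4

theorem susceptible_eq_inv_contact (hβ : β ≠ 0) (hδ : δ = β / (γ + μ))
    (h3 : β * (p * S0 + S1) * A - (γ + μ) * A = 0) (hA : A ≠ 0) :
    p * S0 + S1 = 1 / δ := by
  have h : β * (p * S0 + S1) = γ + μ :=
    sub_eq_zero.mp <| (mul_eq_zero.mp (by linear_combination h3)).resolve_right hA
  rw [hδ, one_div_div, eq_div_iff hβ]
  linear_combination h

theorem add_one_sq_sub_mul_add_eq_zero (x : ℝ) (hδ : δ ≠ 0) (hx : x + 1 ≠ 0)
    (h : p * (1 / (x + 1)) + (1 - p) * x / (x + 1) ^ 2 = 1 / δ) :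
    (x + 1) ^ 2 - δ * (x + 1) + δ * (1 - p) = 0 := by
  field_simp at h
  linear_combination -h

theorem four_mul_le_of_quadratic_eq_zero {c y : ℝ} (hδ : 0 < δ)
    (h : y ^ 2 - δ * y + δ * c = 0) : 4 * c ≤ δ := by
  have : δ * (δ - 4 * c) = (2 * y - δ) ^ 2 := by linear_combination -4 * h
  nlinarith [sq_nonneg (2 * y - δ)]

theorem eq_or_eq_of_quadratic_eq_zero {c y : ℝ} (hδ : 0 < δ) (h : y ^ 2 - δ * y + δ * c = 0) :
    y = δ / 2 * (1 + √(1 - 4 * c / δ)) ∨ y = δ / 2 * (1 - √(1 - 4 * c / δ)) := by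
  have hs : √(1 - 4 * c / δ) ^ 2 = 1 - 4 * c / δ := by
    refine Real.sq_sqrt ?_
    rw [sub_nonneg, div_le_one hδ]
    exact four_mul_le_of_quadratic_eq_zero hδ h
  have hdisc : discrim 1 (-δ) (δ * c) = (δ * √(1 - 4 * c / δ)) * (δ * √(1 - 4 * c / δ)) := by
    rw [discrim, ← sq, mul_pow, hs]
    field_simp
  rcases (quadratic_eq_zero_iff one_ne_zero hdisc y).mp (by linear_combination h) with hy | hy
  · left; rw [hy]; ring
  · right; rw [hy]; ring

theorem A_eq_of_add_one_eq {s : ℝ} (hμ : μ ≠ 0) (hδ : δ ≠ 0) (hγμ : γ + μ ≠ 0)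
    (hκ : δ * (γ / μ + 1) = β / μ) (h : β / μ * A + 1 = δ / 2 * (1 + s)) :
    A = 1 / 2 * (1 + γ / μ)⁻¹ * (1 - 2 / δ + s) := by
  rw [← hκ] at h
  rw [add_comm 1]
  field_simp at h ⊢
  linear_combination h

end TemporaryAdoption

open TemporaryAdoption

theorem stmt_10_general (β μ γ p δ S0 S1 A R : ℝ) (hβ : 0 < β) (hμ : 0 < μ) (hγ : 0 < γ)
    (hδ : δ = β / (γ + μ))
    (h1 : μ - β * S0 * A - μ * S0 = 0)
    (h2 : (1 - p) * β * S0 * A - β * S1 * A - μ * S1 = 0)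
    (h3 : β * (p * S0 + S1) * A - (γ + μ) * A = 0)
    (h4 : γ * A - μ * R = 0)
    (hA : A ≠ 0) :
    S0 = 1 / (δ * (γ / μ + 1) * A + 1) ∧
    S1 = (1 - p) * δ * (γ / μ + 1) * A / (δ * (γ / μ + 1) * A + 1) ^ 2 ∧
    R = (γ / μ) * A ∧
    p * S0 + S1 = 1 / δ ∧
    4 * (1 - p) ≤ δ ∧
    (A = (1 / 2) * (1 + γ / μ)⁻¹ * (1 - 2 / δ + Real.sqrt (1 - 4 * (1 - p) / δ)) ∨
     A = (1 / 2) * (1 + γ / μ)⁻¹ * (1 - 2 / δ - Real.sqrt (1 - 4 * (1 - p) / δ))) := by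
  have hμ0 : μ ≠ 0 := hμ.ne'
  have hγμ : 0 < γ + μ := add_pos hγ hμ
  have hδ0 : 0 < δ := hδ ▸ div_pos hβ hγμ
  have hκ := contact_mul_eq_div hμ0 hδ hγμ.ne'
  have hS0 := S0_eq hμ0 h1
  have hS1 := S1_eq hμ0 h1 h2
  have hsum := susceptible_eq_inv_contact hβ.ne' hδ h3 hA
  have hquad := add_one_sq_sub_mul_add_eq_zero (β / μ * A) hδ0.ne'
    (right_ne_zero_of_mul_eq_one (S0_mul_eq_one hμ0 h1)) (hS0 ▸ hS1 ▸ hsum)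
  refine ⟨hκ ▸ hS0, by rw [hS1, ← hκ]; ring, R_eq hμ0 h4, hsum,
    by simpa using four_mul_le_of_quadratic_eq_zero hδ0 hquad, ?_⟩
  rcases eq_or_eq_of_quadratic_eq_zero hδ0 hquad with hy | hy
  · exact .inl (A_eq_of_add_one_eq hμ0 hδ0.ne' hγμ.ne' hκ hy)
  · rw [sub_eq_add_neg] at hy ⊢
    exact .inr (A_eq_of_add_one_eq hμ0 hδ0.ne' hγμ.ne' hκ hy)

/-- any equilibrium of the temporary adoption model with `A ≠ 0`
satisfies the stated explicit formulas for `S0`, `S1`, `R`, the relation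
`pS0 + S1 = 1/δ`, and its adopter level `A` is one of the two explicit roots;
in particular `δ ≥ 4(1-p)`. -/
theorem stmt_10 (β μ γ p δ S0 S1 A R : ℝ) (hβ : 0 < β) (hμ : 0 < μ) (hγ : 0 < γ)
    (hp : p ∈ Set.Ioo (0:ℝ) 1) (hδ : δ = β / (γ + μ))
    (h1 : μ - β * S0 * A - μ * S0 = 0)
    (h2 : (1 - p) * β * S0 * A - β * S1 * A - μ * S1 = 0)
    (h3 : β * (p * S0 + S1) * A - (γ + μ) * A = 0)
    (h4 : γ * A - μ * R = 0)
    (hA : A ≠ 0) :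
    S0 = 1 / (δ * (γ / μ + 1) * A + 1) ∧
    S1 = (1 - p) * δ * (γ / μ + 1) * A / (δ * (γ / μ + 1) * A + 1) ^ 2 ∧
    R = (γ / μ) * A ∧
    p * S0 + S1 = 1 / δ ∧
    4 * (1 - p) ≤ δ ∧
    (A = (1 / 2) * (1 + γ / μ)⁻¹ * (1 - 2 / δ + Real.sqrt (1 - 4 * (1 - p) / δ)) ∨
     A = (1 / 2) * (1 + γ / μ)⁻¹ * (1 - 2 / δ - Real.sqrt (1 - 4 * (1 - p) / δ))) :=
  stmt_10_general β μ γ p δ S0 S1 A R hβ hμ hγ hδ h1 h2 h3 h4 hA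
end

section
/- Let β > 0, μ > 0, γ > 0, p ∈ (0,1), δ = β/(γ+μ), and consider positive numbers A for which setting S0 = 1/(δ(γ/μ+1)A + 1) and S1 = (1-p)δ(γ/μ+1)A/(δ(γ/μ+1)A + 1)² gives pS0 + S1 = 1/δ (i.e., endemic equilibria of the temporary adoption model). (I) If p < 1/2: there is no such A for δ < 4(1-p); there are exactly two (A₁ > A₂ > 0) for 4(1-p) < δ < 1/p; and exactly one (A₁) for δ ≥ 1/p. (II) If p ≥ 1/2: there is none for δ ≤ 1/p and exactly one (A₁) for δ > 1/p. Here A₁,₂ = (1/2)(1 + γ/μ)⁻¹(1 - 2/δ ± √(1 - 4(1-p)/δ)). -/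
/-!
With `x = c A`, clearing denominators turns the equilibrium condition into the quadratic
`x² + (2 - δ) x + (1 - δ p) = 0`, whose discriminant is `δ (δ - 4 (1 - p))` and whose roots are
`c A₁` and `c A₂`. Their sum `δ - 2` and product `1 - δ p` decide how many of them are positive.
-/

open Set

def endemicLevels (c δ p : ℝ) : Set ℝ :=
  {A | 0 < A ∧ p * (1 / (c * A + 1)) + (1 - p) * c * A / (c * A + 1) ^ 2 = 1 / δ}

/-- `A₁` for `s = √(1 - 4 (1 - p) / δ)` and `A₂` for `s = -√(1 - 4 (1 - p) / δ)`,
where `k = 1 + γ / μ`. -/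
noncomputable def endemicRoot (k δ s : ℝ) : ℝ := 1 / 2 * k⁻¹ * (1 - 2 / δ + s)

section

variable {c k δ p s : ℝ}

theorem equilibrium_eq_iff_quadratic {A : ℝ} (hδ : δ ≠ 0) (hA : c * A + 1 ≠ 0) :
    p * (1 / (c * A + 1)) + (1 - p) * c * A / (c * A + 1) ^ 2 = 1 / δ ↔
      (c * A) ^ 2 + (2 - δ) * (c * A) + (1 - δ * p) = 0 := by
  field_simp
  constructor <;> intro h <;> linear_combination -h

theorem quadratic_pos_of_lt_four (hδ : 0 < δ) (h : δ < 4 * (1 - p)) (x : ℝ) :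
    0 < x ^ 2 + (2 - δ) * x + (1 - δ * p) := by
  nlinarith [sq_nonneg (2 * x + 2 - δ), mul_pos hδ (sub_pos.2 h)]

theorem endemicLevels_eq_empty (hc : 0 < c) (hδ : δ ≠ 0)
    (hQ : ∀ x, 0 < x → 0 < x ^ 2 + (2 - δ) * x + (1 - δ * p)) :
    endemicLevels c δ p = ∅ := by
  refine eq_empty_of_forall_notMem fun A ⟨hA, hE⟩ => ?_
  rw [equilibrium_eq_iff_quadratic hδ (by positivity)] at hE
  exact (hQ _ (mul_pos hc hA)).ne' hE

theorem endemicRoot_strictMono (hk : 0 < k) : StrictMono (endemicRoot k δ) := by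
  intro s t h
  unfold endemicRoot
  gcongr

theorem endemicRoot_add_endemicRoot_neg :
    endemicRoot k δ s + endemicRoot k δ (-s) = k⁻¹ * (1 - 2 / δ) := by
  unfold endemicRoot
  ring

section

variable (hk : k ≠ 0) (hδ : δ ≠ 0) (hs : s ^ 2 = 1 - 4 * (1 - p) / δ)
include hk hδ hs

theorem quadratic_eq_mul_endemicRoot (A : ℝ) :
    (δ * k * A) ^ 2 + (2 - δ) * (δ * k * A) + (1 - δ * p) =
      (δ * k) ^ 2 * ((A - endemicRoot k δ s) * (A - endemicRoot k δ (-s))) := by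
  have hs' : δ * s ^ 2 = δ - 4 * (1 - p) := by rw [hs]; field_simp
  unfold endemicRoot
  field_simp
  linear_combination δ * hs'

theorem endemicRoot_mul_endemicRoot_neg :
    endemicRoot k δ s * endemicRoot k δ (-s) = (1 - δ * p) / (δ * k) ^ 2 := by
  have h := quadratic_eq_mul_endemicRoot hk hδ hs 0
  rw [eq_div_iff (by positivity)]
  linear_combination -h

end

theorem endemicLevels_eq_inter (hk : 0 < k) (hδ : 0 < δ) (hs : s ^ 2 = 1 - 4 * (1 - p) / δ) :
    endemicLevels (δ * k) δ p = Ioi 0 ∩ {endemicRoot k δ s, endemicRoot k δ (-s)} := by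
  ext A
  refine and_congr_right fun hA => ?_
  rw [equilibrium_eq_iff_quadratic hδ.ne' (by positivity),
    quadratic_eq_mul_endemicRoot hk.ne' hδ.ne' hs, mul_eq_zero, mul_eq_zero, sub_eq_zero,
    sub_eq_zero]
  simp [(pow_pos (mul_pos hδ hk) 2).ne']

local notation "√D" => Real.sqrt (1 - 4 * (1 - p) / δ)

theorem endemicLevels_eq_pair (hk : 0 < k) (h4 : 4 * (1 - p) < δ) (h2 : 2 < δ)
    (hδp : δ * p < 1) :
    endemicLevels (δ * k) δ p = {endemicRoot k δ √D, endemicRoot k δ (-√D)} ∧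
      endemicRoot k δ (-√D) < endemicRoot k δ √D ∧ 0 < endemicRoot k δ (-√D) := by
  have hδ : 0 < δ := by linarith
  have hD : 0 < 1 - 4 * (1 - p) / δ := by rwa [sub_pos, div_lt_one hδ]
  have hs := Real.sq_sqrt hD.le
  have hlt : endemicRoot k δ (-√D) < endemicRoot k δ √D :=
    endemicRoot_strictMono hk (neg_lt_self (Real.sqrt_pos.2 hD))
  have hprod := endemicRoot_mul_endemicRoot_neg hk.ne' hδ.ne' hs
  have h2δ : 0 < 1 - 2 / δ := by rwa [sub_pos, div_lt_one hδ]
  have hpos : 0 < endemicRoot k δ (-√D) := by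
    have : 0 < endemicRoot k δ √D * endemicRoot k δ (-√D) := by
      rw [hprod]; exact div_pos (by linarith) (by positivity)
    have : 0 < endemicRoot k δ √D + endemicRoot k δ (-√D) := by
      rw [endemicRoot_add_endemicRoot_neg]; positivity
    nlinarith
  refine ⟨?_, hlt, hpos⟩
  rw [endemicLevels_eq_inter hk hδ hs, inter_eq_right]
  exact insert_subset (hpos.trans hlt) (singleton_subset_iff.2 hpos)

theorem endemicLevels_eq_singleton (hk : 0 < k) (hp : 0 < p) (hδp : 1 ≤ δ * p)
    (h : 2 < δ ∨ 1 < δ * p) :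
    endemicLevels (δ * k) δ p = {endemicRoot k δ √D} := by
  have hδ : 0 < δ := by nlinarith
  have h4 : 4 * (1 - p) ≤ δ := by nlinarith [sq_nonneg (2 * p - 1)]
  have hs := Real.sq_sqrt (sub_nonneg.2 ((div_le_one hδ).2 h4))
  have hle : endemicRoot k δ (-√D) ≤ endemicRoot k δ √D :=
    (endemicRoot_strictMono hk).monotone (neg_le_self (Real.sqrt_nonneg _))
  have hprod := endemicRoot_mul_endemicRoot_neg hk.ne' hδ.ne' hs
  have hneg : endemicRoot k δ (-√D) ≤ 0 := by
    have : endemicRoot k δ √D * endemicRoot k δ (-√D) ≤ 0 := by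
      rw [hprod]; exact div_nonpos_of_nonpos_of_nonneg (by linarith) (sq_nonneg _)
    nlinarith
  have hpos : 0 < endemicRoot k δ √D := by
    rcases h with h | h
    · have h2δ : 0 < 1 - 2 / δ := by rwa [sub_pos, div_lt_one hδ]
      have : 0 < endemicRoot k δ √D + endemicRoot k δ (-√D) := by
        rw [endemicRoot_add_endemicRoot_neg]; positivity
      linarith
    · have : endemicRoot k δ √D * endemicRoot k δ (-√D) < 0 := by
        rw [hprod]; exact div_neg_of_neg_of_pos (by linarith) (by positivity)
      nlinarith
  rw [endemicLevels_eq_inter hk hδ hs]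
  ext A
  simp only [mem_inter_iff, mem_Ioi, mem_insert_iff, mem_singleton_iff]
  constructor
  · rintro ⟨hA, rfl | rfl⟩
    · rfl
    · linarith
  · rintro rfl
    exact ⟨hpos, Or.inl rfl⟩

end

/-- classification of the positive endemic equilibrium levels of the
temporary adoption model, according to the cases `p < 1/2` and `p ≥ 1/2`. -/
theorem stmt_11 (β μ γ p δ : ℝ) (hβ : 0 < β) (hμ : 0 < μ) (hγ : 0 < γ)
    (hp : p ∈ Set.Ioo (0:ℝ) 1) (hδ : δ = β / (γ + μ)) :
    let c : ℝ := δ * (γ / μ + 1)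
    let A₁ : ℝ := (1 / 2) * (1 + γ / μ)⁻¹ * (1 - 2 / δ + Real.sqrt (1 - 4 * (1 - p) / δ))
    let A₂ : ℝ := (1 / 2) * (1 + γ / μ)⁻¹ * (1 - 2 / δ - Real.sqrt (1 - 4 * (1 - p) / δ))
    let S : Set ℝ := {A : ℝ | 0 < A ∧
      p * (1 / (c * A + 1)) + (1 - p) * c * A / (c * A + 1) ^ 2 = 1 / δ}
    (p < 1 / 2 →
      (δ < 4 * (1 - p) → S = ∅) ∧
      (4 * (1 - p) < δ → δ < 1 / p → S = {A₁, A₂} ∧ A₂ < A₁ ∧ 0 < A₂) ∧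
      (1 / p ≤ δ → S = {A₁})) ∧
    (1 / 2 ≤ p →
      (δ ≤ 1 / p → S = ∅) ∧
      (1 / p < δ → S = {A₁})) := by
  intro c A₁ A₂ S
  have hp0 : 0 < p := hp.1
  have hδ0 : 0 < δ := hδ ▸ by positivity
  have hk : 0 < 1 + γ / μ := by positivity
  have hS : S = endemicLevels (δ * (1 + γ / μ)) δ p := by
    simp only [S, c, add_comm (γ / μ)]; rfl
  have hA₂ : A₂ = endemicRoot (1 + γ / μ) δ (-Real.sqrt (1 - 4 * (1 - p) / δ)) := by
    simp only [A₂, endemicRoot, sub_eq_add_neg]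
  rw [hS, hA₂]
  refine ⟨fun hp2 => ⟨fun h => ?_, fun h4 h1 => ?_, fun h1 => ?_⟩,
    fun hp2 => ⟨fun h1 => ?_, fun h1 => ?_⟩⟩
  · exact endemicLevels_eq_empty (by positivity) hδ0.ne' fun x _ =>
      quadratic_pos_of_lt_four hδ0 h x
  · exact endemicLevels_eq_pair hk h4 (by linarith) (by rwa [lt_div_iff₀ hp0] at h1)
  · have h2 : 2 < δ := lt_of_lt_of_le (by rw [lt_div_iff₀ hp0]; linarith) h1
    exact endemicLevels_eq_singleton hk hp0 (by rwa [div_le_iff₀ hp0] at h1) (.inl h2)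
  · have hδp : δ * p ≤ 1 := by rwa [le_div_iff₀ hp0] at h1
    have hδ2 : δ ≤ 2 := by nlinarith
    refine endemicLevels_eq_empty (by positivity) hδ0.ne' fun x hx => ?_
    nlinarith [mul_nonneg (sub_nonneg.2 hδ2) hx.le]
  · have hδp : 1 < δ * p := by rwa [div_lt_iff₀ hp0] at h1
    exact endemicLevels_eq_singleton hk hp0 hδp.le (.inr hδp)
end

section
/- Let β > 0, μ > 0, γ > 0, p ∈ (0,1), δ = β/(γ+μ), and let A > 0, S0, S1 satisfy S0 = 1/(δ(γ/μ+1)A + 1), S1 = (1-p)δ(γ/μ+1)A/(δ(γ/μ+1)A + 1)², and pS0 + S1 = 1/δ. Then the characteristic polynomial of the 3×3 Jacobian matrix J = [[-βA - μ, 0, -βS0],[(1-p)βA, -βA - μ, (1-p)βS0 - βS1],[pβA, βA, β(pS0 + S1) - γ - μ]] is λ³ + a₂λ² + a₁λ + a₀ with a₀ = βμ((1 - 1/δ)(βA + μ) + (1-p)μ(μ/(βA + μ) - 2)), a₁ = (βA + μ)² + (p - 1/δ)βμ, and a₂ = 2(βA + μ). -/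
/-!
Since `δ (γ/μ + 1) = β/μ`, the equilibrium values are `S0 = μ/(βA + μ)` and
`S1 = (1-p)βAμ/(βA + μ)²`, and `pS0 + S1 = 1/δ = (γ+μ)/β` makes the bottom-right entry of `J` vanish.
Expanding the characteristic polynomial of a 3×3 matrix and clearing the denominator `βA + μ`
then gives the coefficients.
-/

open Polynomial

theorem Matrix.charpoly_fin_three_of {R : Type*} [CommRing R] (a b c d e f g h i : R) :
    (!![a, b, c; d, e, f; g, h, i]).charpoly = X ^ 3 + C (-(a + e + i)) * X ^ 2
      + C (a * e - b * d + a * i - c * g + e * i - f * h) * X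
      + C (-(a * e * i - a * f * h - b * d * i + b * f * g + c * d * h - c * e * g)) := by
  rw [charpoly, det_fin_three]
  simp only [charmatrix_apply_eq, charmatrix_apply_ne, ne_eq, Fin.reduceEq, not_false_eq_true,
    of_apply, cons_val', cons_val_zero, cons_val_fin_one, cons_val_one, cons_val,
    map_add, map_neg, map_sub, map_mul]
  ring

lemma charpoly_jacobian_of_equilibrium {β μ γ p S0 S1 A : ℝ} (hb : β * A + μ ≠ 0)
    (hS0 : S0 = μ / (β * A + μ)) (hS1 : S1 = (1 - p) * β * A * μ / (β * A + μ) ^ 2)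
    (hs : β * (p * S0 + S1) = γ + μ) :
    (!![-β * A - μ, 0, -β * S0;
        (1 - p) * β * A, -β * A - μ, (1 - p) * β * S0 - β * S1;
        p * β * A, β * A, β * (p * S0 + S1) - γ - μ]).charpoly
      = X ^ 3 + C (2 * (β * A + μ)) * X ^ 2
        + C ((β * A + μ) ^ 2 + (p - (p * S0 + S1)) * β * μ) * X
        + C (β * μ * ((1 - (p * S0 + S1)) * (β * A + μ)
          + (1 - p) * μ * (μ / (β * A + μ) - 2))) := by
  rw [Matrix.charpoly_fin_three_of, hs, sub_sub, sub_self]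
  subst hS0 hS1
  congrm X ^ 3 + C ?_ * X ^ 2 + C ?_ * X + C ?_
  · ring
  · field_simp
    ring
  · field_simp
    ring

theorem stmt_13_general (β μ γ p δ S0 S1 A : ℝ) (hβ : 0 < β) (hμ : 0 < μ) (hγ : 0 < γ)
    (hδ : δ = β / (γ + μ)) (hA : 0 < A)
    (hS0 : S0 = 1 / (δ * (γ / μ + 1) * A + 1))
    (hS1 : S1 = (1 - p) * δ * (γ / μ + 1) * A / (δ * (γ / μ + 1) * A + 1) ^ 2)
    (heq : p * S0 + S1 = 1 / δ) :
    let J : Matrix (Fin 3) (Fin 3) ℝ :=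
      !![-β * A - μ, 0, -β * S0;
         (1 - p) * β * A, -β * A - μ, (1 - p) * β * S0 - β * S1;
         p * β * A, β * A, β * (p * S0 + S1) - γ - μ]
    let a₀ : ℝ := β * μ * ((1 - 1 / δ) * (β * A + μ) + (1 - p) * μ * (μ / (β * A + μ) - 2))
    let a₁ : ℝ := (β * A + μ) ^ 2 + (p - 1 / δ) * β * μ
    let a₂ : ℝ := 2 * (β * A + μ)
    J.charpoly = X ^ 3 + C a₂ * X ^ 2 + C a₁ * X + C a₀ := by
  have hb : 0 < β * A + μ := by positivity
  have hS0_eq : S0 = μ / (β * A + μ) := by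
    rw [hS0, hδ]
    field_simp
  have hS1_eq : S1 = (1 - p) * β * A * μ / (β * A + μ) ^ 2 := by
    rw [hS1, hδ]
    field_simp
  have hs : β * (p * S0 + S1) = γ + μ := by
    rw [heq, hδ]
    field_simp
  rw [← heq]
  exact charpoly_jacobian_of_equilibrium hb.ne' hS0_eq hS1_eq hs

/-- the characteristic polynomial of the Jacobian of the temporary
adoption model at an endemic equilibrium is `λ³ + a₂λ² + a₁λ + a₀` with the stated
coefficients. -/
theorem stmt_13 (β μ γ p δ S0 S1 A : ℝ) (hβ : 0 < β) (hμ : 0 < μ) (hγ : 0 < γ)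
    (hp : p ∈ Set.Ioo (0:ℝ) 1) (hδ : δ = β / (γ + μ)) (hA : 0 < A)
    (hS0 : S0 = 1 / (δ * (γ / μ + 1) * A + 1))
    (hS1 : S1 = (1 - p) * δ * (γ / μ + 1) * A / (δ * (γ / μ + 1) * A + 1) ^ 2)
    (heq : p * S0 + S1 = 1 / δ) :
    let J : Matrix (Fin 3) (Fin 3) ℝ :=
      !![-β * A - μ, 0, -β * S0;
         (1 - p) * β * A, -β * A - μ, (1 - p) * β * S0 - β * S1;
         p * β * A, β * A, β * (p * S0 + S1) - γ - μ]
    let a₀ : ℝ := β * μ * ((1 - 1 / δ) * (β * A + μ) + (1 - p) * μ * (μ / (β * A + μ) - 2))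
    let a₁ : ℝ := (β * A + μ) ^ 2 + (p - 1 / δ) * β * μ
    let a₂ : ℝ := 2 * (β * A + μ)
    J.charpoly = X ^ 3 + C a₂ * X ^ 2 + C a₁ * X + C a₀ :=
  stmt_13_general β μ γ p δ S0 S1 A hβ hμ hγ hδ hA hS0 hS1 heq
end

section
/- Let a₀, a₁, a₂ be real numbers with a₀ > 0, a₂ > 0 and a₁a₂ < a₀. Then the cubic polynomial λ³ + a₂λ² + a₁λ + a₀ has exactly one real negative root, and its other two roots (counted with multiplicity) have positive real part. -/
open Polynomial

/-- Quadratic helper: if b < 0 < c, then X² + bX + c has two roots with positive real part. -/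
lemma quad_roots (b c : ℝ) (hb : b < 0) (hc : 0 < c) :
    ∃ z w : ℂ, 0 < z.re ∧ 0 < w.re ∧ z + w = -(b : ℂ) ∧ z * w = (c : ℂ) := by
  rcases le_or_gt (4 * c) (b ^ 2) with hd | hd
  · -- real roots
    set s := Real.sqrt (b ^ 2 - 4 * c) with hs
    have hs0 : 0 ≤ s := Real.sqrt_nonneg _
    have hs2 : s ^ 2 = b ^ 2 - 4 * c := Real.sq_sqrt (by linarith)
    have hslt : s < -b := by nlinarith [sq_nonneg (s + b), sq_nonneg (s - b)]
    refine ⟨(((-b + s) / 2 : ℝ) : ℂ), (((-b - s) / 2 : ℝ) : ℂ), ?_, ?_, ?_, ?_⟩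
    · simp only [Complex.ofReal_re]; linarith
    · simp only [Complex.ofReal_re]; linarith
    · push_cast; ring
    · have hprod : ((-b + s) / 2) * ((-b - s) / 2) = c := by nlinarith
      exact_mod_cast hprod
  · -- complex conjugate roots
    set t := Real.sqrt (4 * c - b ^ 2) with ht
    have ht2 : t ^ 2 = 4 * c - b ^ 2 := Real.sq_sqrt (by linarith)
    refine ⟨(((-b) / 2 : ℝ) : ℂ) + ((t / 2 : ℝ) : ℂ) * Complex.I,
            (((-b) / 2 : ℝ) : ℂ) - ((t / 2 : ℝ) : ℂ) * Complex.I, ?_, ?_, ?_, ?_⟩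
    · simp [Complex.add_re, Complex.ofReal_re, Complex.mul_re]; linarith
    · simp [Complex.sub_re, Complex.ofReal_re, Complex.mul_re]; linarith
    · push_cast; ring
    · have e : ((((-b) / 2 : ℝ) : ℂ) + ((t / 2 : ℝ) : ℂ) * Complex.I) *
          ((((-b) / 2 : ℝ) : ℂ) - ((t / 2 : ℝ) : ℂ) * Complex.I)
          = (((-b) / 2 : ℝ) : ℂ) ^ 2 + ((t / 2 : ℝ) : ℂ) ^ 2 := by
        linear_combination (-((t / 2 : ℝ) : ℂ) ^ 2) * Complex.I_sq
      rw [e]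
      have key : ((-b) / 2 : ℝ) ^ 2 + (t / 2) ^ 2 = c := by nlinarith
      exact_mod_cast key

/-- a real cubic `λ³ + a₂λ² + a₁λ + a₀` with `a₀ > 0`, `a₂ > 0` and
`a₁a₂ < a₀` has exactly one real negative root, and its other two roots (counted
with multiplicity) have positive real part. -/
theorem stmt_16 (a₀ a₁ a₂ : ℝ) (h₀ : 0 < a₀) (h₂ : 0 < a₂) (h : a₁ * a₂ < a₀) :
    ∃ (r : ℝ) (z w : ℂ), r < 0 ∧ 0 < z.re ∧ 0 < w.re ∧
      (X ^ 3 + C (a₂ : ℂ) * X ^ 2 + C (a₁ : ℂ) * X + C (a₀ : ℂ))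
        = (X - C ((r : ℝ) : ℂ)) * (X - C z) * (X - C w) := by
  set f : ℝ → ℝ := fun x => x ^ 3 + a₂ * x ^ 2 + a₁ * x + a₀ with hf
  set K : ℝ := 1 + a₂ + |a₁| + a₀ with hK
  have habs : 0 ≤ |a₁| := abs_nonneg a₁
  have hK1 : 1 ≤ K := by simp only [hK]; linarith
  have hKa₂ : a₂ < K := by simp only [hK]; linarith
  have hKsq : K ≤ K ^ 2 := by nlinarith
  have hfK : f (-K) < 0 := by
    have h1 : a₁ * (-K) ≤ |a₁| * K := by
      nlinarith [neg_abs_le a₁, le_abs_self a₁]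
    have h2 : |a₁| * K ≤ |a₁| * K ^ 2 := mul_le_mul_of_nonneg_left hKsq habs
    have h3 : a₀ ≤ a₀ * K ^ 2 := by nlinarith
    have h5 : a₂ + |a₁| + a₀ = K - 1 := by simp only [hK]; ring
    have h6 : (1:ℝ) ≤ K ^ 2 := by nlinarith
    simp only [hf]
    nlinarith
  have hfa₂ : 0 < f (-a₂) := by
    simp only [hf]; nlinarith
  -- intermediate value theorem
  have hcont : ContinuousOn f (Set.Icc (-K) (-a₂)) := by fun_prop
  have hiv := intermediate_value_Icc (by linarith : (-K : ℝ) ≤ -a₂) hcont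
  have h0mem : (0 : ℝ) ∈ Set.Icc (f (-K)) (f (-a₂)) := ⟨le_of_lt hfK, le_of_lt hfa₂⟩
  obtain ⟨r, hrmem, hfr⟩ := hiv h0mem
  have hrle : r ≤ -a₂ := hrmem.2
  have hrlt : r < -a₂ := lt_of_le_of_ne hrle (by rintro rfl; exact ne_of_gt hfa₂ hfr)
  have hr0 : r < 0 := by linarith
  -- factor out (X - r)
  set b : ℝ := a₂ + r with hb
  set c : ℝ := a₁ + a₂ * r + r ^ 2 with hc
  have hbneg : b < 0 := by simp only [hb]; linarith
  have hfr' : r ^ 3 + a₂ * r ^ 2 + a₁ * r + a₀ = 0 := hfr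
  have hrc : -r * c = a₀ := by rw [hc]; linear_combination -hfr'
  have hcpos : 0 < c := by nlinarith [hrc]
  obtain ⟨z, w, hz, hw, hsum, hmul⟩ := quad_roots b c hbneg hcpos
  refine ⟨r, z, w, hr0, hz, hw, ?_⟩
  have hbC : ((b : ℝ) : ℂ) = ((a₂ : ℝ) : ℂ) + ((r : ℝ) : ℂ) := by
    rw [hb]; push_cast; ring
  have hcC : ((c : ℝ) : ℂ) = ((a₁ : ℝ) : ℂ) + ((a₂ : ℝ) : ℂ) * ((r : ℝ) : ℂ) + ((r : ℝ) : ℂ) ^ 2 := by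
    rw [hc]; push_cast; ring
  have e2 : ((a₂ : ℝ) : ℂ) = -(((r : ℝ) : ℂ) + z + w) := by
    linear_combination hsum - hbC
  have e1 : ((a₁ : ℝ) : ℂ) = ((r : ℝ) : ℂ) * (z + w) + z * w := by
    linear_combination -((r : ℝ) : ℂ) * hsum - hmul - hcC + ((r : ℝ) : ℂ) * hbC
  have e0 : ((a₀ : ℝ) : ℂ) = -(((r : ℝ) : ℂ) * (z * w)) := by
    have ha0 : a₀ = -(r * c) := by linear_combination -hrc
    rw [hmul, ha0]; push_cast; ring
  rw [e2, e1, e0]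
  simp only [map_add, map_mul, map_neg]
  ring
end

section
/- Let β > 0, μ > 0, γ > 0, p ∈ (0,1), δ = β/(γ+μ) with δ > 4(1-p), let A₁ = (1/2)(1 + γ/μ)⁻¹(1 - 2/δ + √(1 - 4(1-p)/δ)) be positive, and let a₀, a₁, a₂ be the characteristic-polynomial coefficients at A = A₁, namely a₀ = βμ((1 - 1/δ)(βA₁ + μ) + (1-p)μ(μ/(βA₁ + μ) - 2)), a₁ = (βA₁ + μ)² + (p - 1/δ)βμ, a₂ = 2(βA₁ + μ). Then the inequality a₁a₂ > a₀ is equivalent to (μ/(γ+μ))·δ²·(1 + √(1 - 4(1-p)/δ))³ > 2(1-2p)·((δ-2) + δ√(1 - 4(1-p)/δ)). In particular: if p ≥ 1/2 this always holds, so every root of λ³ + a₂λ² + a₁λ + a₀ has negative real part; and if p < 1/2 it holds if and only if γ/μ < F(δ), where F(δ) = δ²/(2(1-2p)) · (1 + √(1 - 4(1-p)/δ))³ / ((δ-2) + δ√(1 - 4(1-p)/δ)) - 1. -/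
lemma cubic_neg_re (a₀ a₁ a₂ : ℝ) (h2 : 0 < a₂) (h0 : 0 < a₀) (h : a₀ < a₁ * a₂)
    (z : ℂ) (hz : z ^ 3 + (a₂ : ℂ) * z ^ 2 + (a₁ : ℂ) * z + (a₀ : ℂ) = 0) : z.re < 0 := by
  have ha1 : 0 < a₁ := by nlinarith
  by_contra hx
  push_neg at hx
  set x := z.re with hxdef
  set y := z.im with hydef
  have hre := congrArg Complex.re hz
  have him := congrArg Complex.im hz
  simp [pow_succ, Complex.mul_re, Complex.mul_im] at hre him
  have hre' : x^3 - 3*x*y^2 + a₂*(x^2 - y^2) + a₁*x + a₀ = 0 := by linear_combination hre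
  have him' : y*(3*x^2 - y^2 + 2*a₂*x + a₁) = 0 := by linear_combination him
  rcases eq_or_ne y 0 with hy | hy
  · rw [hy] at hre'
    nlinarith [pow_nonneg hx 3, mul_nonneg h2.le (sq_nonneg x), mul_nonneg ha1.le hx]
  · have hy2 : y^2 = 3*x^2 + 2*a₂*x + a₁ := by
      have := (mul_eq_zero.mp him').resolve_left hy
      linarith
    have e1 : x*y^2 = x*(3*x^2 + 2*a₂*x + a₁) := by rw [hy2]
    have e2 : a₂*y^2 = a₂*(3*x^2 + 2*a₂*x + a₁) := by rw [hy2]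
    nlinarith [pow_nonneg hx 3, mul_nonneg h2.le (sq_nonneg x), mul_nonneg ha1.le hx,
      mul_nonneg (mul_nonneg h2.le h2.le) hx, hre', e1, e2]

set_option maxHeartbeats 1000000 in
/-- the Routh–Hurwitz condition `a₁a₂ > a₀` at the endemic equilibrium
`E₁` of the temporary adoption model is equivalent to the stated inequality; for
`p ≥ 1/2` it always holds (so all roots of the characteristic polynomial have
negative real part), and for `p < 1/2` it is equivalent to `γ/μ < F(δ)`. -/
theorem stmt_17 (β μ γ p δ : ℝ) (hβ : 0 < β) (hμ : 0 < μ) (hγ : 0 < γ)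
    (hp : p ∈ Set.Ioo (0:ℝ) 1) (hδeq : δ = β / (γ + μ)) (hδ : 4 * (1 - p) < δ) :
    let s : ℝ := Real.sqrt (1 - 4 * (1 - p) / δ)
    let A₁ : ℝ := (1 / 2) * (1 + γ / μ)⁻¹ * (1 - 2 / δ + s)
    let a₀ : ℝ := β * μ * ((1 - 1 / δ) * (β * A₁ + μ) + (1 - p) * μ * (μ / (β * A₁ + μ) - 2))
    let a₁ : ℝ := (β * A₁ + μ) ^ 2 + (p - 1 / δ) * β * μ
    let a₂ : ℝ := 2 * (β * A₁ + μ)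
    let F : ℝ := δ ^ 2 / (2 * (1 - 2 * p)) * (1 + s) ^ 3 / ((δ - 2) + δ * s) - 1
    0 < A₁ →
      ((a₀ < a₁ * a₂ ↔
          2 * (1 - 2 * p) * ((δ - 2) + δ * s) < (μ / (γ + μ)) * δ ^ 2 * (1 + s) ^ 3) ∧
       (1 / 2 ≤ p → ∀ z : ℂ,
          z ^ 3 + (a₂ : ℂ) * z ^ 2 + (a₁ : ℂ) * z + (a₀ : ℂ) = 0 → z.re < 0) ∧
       (p < 1 / 2 → (a₀ < a₁ * a₂ ↔ γ / μ < F))) := by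
  intro s A₁ a₀ a₁ a₂ F hA₁
  have hγμ : 0 < γ + μ := by linarith
  have hδ0 : 0 < δ := by nlinarith [hp.2]
  have hβ' : β = δ * (γ + μ) := by rw [hδeq]; field_simp
  have harg : 0 < 1 - 4 * (1 - p) / δ := by
    rw [sub_pos, div_lt_one hδ0]; linarith
  have hs0 : 0 < s := Real.sqrt_pos.mpr harg
  have hs2 : s ^ 2 = 1 - 4 * (1 - p) / δ := Real.sq_sqrt harg.le
  have hs2' : s ^ 2 * δ = δ - 4 * (1 - p) := by
    rw [hs2]; field_simp
  have hpv : p = 1 - (δ - s ^ 2 * δ) / 4 := by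
    rw [hs2']; ring
  have h1s : (0:ℝ) < 1 + s := by linarith
  -- value of β*A₁+μ
  have hB : β * A₁ + μ = μ * δ * (1 + s) / 2 := by
    show β * ((1 / 2) * (1 + γ / μ)⁻¹ * (1 - 2 / δ + s)) + μ = μ * δ * (1 + s) / 2
    rw [hβ']
    field_simp
    ring
  have hBpos : 0 < β * A₁ + μ := by
    rw [hB]; positivity
  -- positivity of 1 - 2/δ + s  and δ + δ s - 2
  have hinv : 0 < (1 + γ / μ)⁻¹ := by
    have : 0 < 1 + γ / μ := by positivity
    exact inv_pos.mpr this
  have hX : 0 < 1 - 2 / δ + s := by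
    by_contra hXn
    push_neg at hXn
    have hA1' : 0 < (1 / 2) * (1 + γ / μ)⁻¹ * (1 - 2 / δ + s) := hA₁
    nlinarith [mul_nonpos_of_nonneg_of_nonpos hinv.le hXn]
  have hApos : 0 < δ - 2 + δ * s := by
    have hd : δ * (2 / δ) = 2 := by field_simp
    nlinarith [mul_pos hδ0 hX]
  -- key identities
  have ha0 : a₀ = β * μ ^ 2 * s * (δ + δ * s - 2) / 2 := by
    show β * μ * ((1 - 1 / δ) * (β * A₁ + μ) + (1 - p) * μ * (μ / (β * A₁ + μ) - 2)) = _
    rw [hB, hβ', hpv]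
    field_simp
    ring
  have hKey : a₁ * a₂ - a₀ =
      μ ^ 2 * δ / 4 * (μ * δ ^ 2 * (1 + s) ^ 3 - 2 * (γ + μ) * (1 - 2 * p) * (δ - 2 + δ * s)) := by
    show ((β * A₁ + μ) ^ 2 + (p - 1 / δ) * β * μ) * (2 * (β * A₁ + μ))
        - β * μ * ((1 - 1 / δ) * (β * A₁ + μ) + (1 - p) * μ * (μ / (β * A₁ + μ) - 2)) = _
    rw [hB, hβ', hpv]
    field_simp
    ring
  -- the basic iff
  have hiff : (a₀ < a₁ * a₂) ↔
      (0 < μ * δ ^ 2 * (1 + s) ^ 3 - 2 * (γ + μ) * (1 - 2 * p) * (δ - 2 + δ * s)) := by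
    rw [← sub_pos, hKey]
    have hc : 0 < μ ^ 2 * δ / 4 := by positivity
    constructor
    · intro h
      by_contra hE
      push_neg at hE
      linarith [mul_nonpos_of_nonneg_of_nonpos hc.le hE]
    · intro h
      exact mul_pos hc h
  have hiff2 : (2 * (1 - 2 * p) * ((δ - 2) + δ * s) < (μ / (γ + μ)) * δ ^ 2 * (1 + s) ^ 3) ↔
      (0 < μ * δ ^ 2 * (1 + s) ^ 3 - 2 * (γ + μ) * (1 - 2 * p) * (δ - 2 + δ * s)) := by
    rw [show (μ / (γ + μ)) * δ ^ 2 * (1 + s) ^ 3 = μ * δ ^ 2 * (1 + s) ^ 3 / (γ + μ) by ring,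
      lt_div_iff₀ hγμ]
    constructor <;> intro h <;> nlinarith
  refine ⟨hiff.trans hiff2.symm, ?_, ?_⟩
  · -- p ≥ 1/2
    intro hp2 z hz
    have ha0pos : 0 < a₀ := by
      rw [ha0, hβ']
      have : 0 < δ + δ * s - 2 := by linarith
      positivity
    have ha2pos : 0 < a₂ := by
      show 0 < 2 * (β * A₁ + μ)
      linarith
    have hRH : a₀ < a₁ * a₂ := by
      rw [hiff]
      have h1 : 0 < μ * δ ^ 2 * (1 + s) ^ 3 := by positivity
      nlinarith [mul_nonneg (mul_pos hγμ hApos).le (by linarith : (0:ℝ) ≤ 2 * p - 1)]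
    exact cubic_neg_re a₀ a₁ a₂ ha2pos ha0pos hRH z hz
  · -- p < 1/2
    intro hp2
    have h12 : 0 < 1 - 2 * p := by linarith
    have hden : (0:ℝ) < 2 * (1 - 2 * p) * (δ - 2 + δ * s) := by positivity
    have hFval : F = (δ ^ 2 * (1 + s) ^ 3 - 2 * (1 - 2 * p) * (δ - 2 + δ * s)) /
        (2 * (1 - 2 * p) * (δ - 2 + δ * s)) := by
      show δ ^ 2 / (2 * (1 - 2 * p)) * (1 + s) ^ 3 / ((δ - 2) + δ * s) - 1 = _
      field_simp
    have key : (γ / μ < F) ↔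
        (0 < μ * δ ^ 2 * (1 + s) ^ 3 - 2 * (γ + μ) * (1 - 2 * p) * (δ - 2 + δ * s)) := by
      rw [hFval, div_lt_div_iff₀ hμ hden]
      constructor <;> intro h <;> nlinarith
    rw [hiff, key]
end

section
/- Let p ∈ (0,1/2) and define F(δ) = δ²/(2(1-2p)) · (1 + √(1 - 4(1-p)/δ))³ / ((δ-2) + δ√(1 - 4(1-p)/δ)) - 1 for δ ≥ 4(1-p). (i) If p < 1/4, then F is strictly monotone increasing on [4(1-p), ∞). (ii) If 1/4 ≤ p < 1/2, then F is strictly decreasing on [4(1-p), 1 + 1/√p] and strictly increasing on [1 + 1/√p, ∞). -/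
/-!
Substitute `s = √(1 - 4(1-p)/δ)`, which increases strictly from `0` towards `1` as `δ` runs
over `[4(1-p), ∞)`. Since `δ = 4(1-p)/(1-s²)`, the function becomes
`G(s) = (2-2p)²(1+s) / ((1-2p)(1-s)(1-2p+s)) - 1`, and
`G t - G s` has the sign of `(t - s)((1+s)(1+t) - 4p)`. So `G` increases where `(1+s)² > 4p`
and decreases where `(1+s)² < 4p`; the switch happens at `s = 2√p - 1`, i.e. `δ = 1 + 1/√p`.
-/

open Set

namespace TemporaryAdoption

noncomputable def boundaryInS (p s : ℝ) : ℝ :=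
  (2 - 2 * p) ^ 2 * (1 + s) / ((1 - 2 * p) * (1 - s) * (1 - 2 * p + s)) - 1

section BoundaryInS

variable {p s t : ℝ}

theorem boundaryInS_sub_boundaryInS (hp : 1 - 2 * p ≠ 0) (hs : 1 - s ≠ 0)
    (hs' : 1 - 2 * p + s ≠ 0) (ht : 1 - t ≠ 0) (ht' : 1 - 2 * p + t ≠ 0) :
    boundaryInS p t - boundaryInS p s =
      (2 - 2 * p) ^ 2 * (t - s) / ((1 - 2 * p) * (1 - s) * (1 - 2 * p + s) * (1 - t) *
        (1 - 2 * p + t)) * ((1 + s) * (1 + t) - 4 * p) := by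
  unfold boundaryInS
  field_simp
  ring

theorem boundaryInS_sub_boundaryInS_eq_pos_mul (hp : p < 1 / 2) (hs : 0 ≤ s) (hst : s < t)
    (ht : t < 1) :
    ∃ k > 0, boundaryInS p t - boundaryInS p s = k * ((1 + s) * (1 + t) - 4 * p) := by
  have h2p : 0 < 1 - 2 * p := by linarith
  refine ⟨_, ?_, boundaryInS_sub_boundaryInS h2p.ne' (by linarith) (by linarith)
    (by linarith) (by linarith)⟩
  have : 0 < 2 - 2 * p := by linarith
  apply div_pos (mul_pos (by positivity) (sub_pos.2 hst))
  apply mul_pos (mul_pos (mul_pos (mul_pos h2p _) _) _) _ <;> linarith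

theorem strictMonoOn_boundaryInS {c : ℝ} (hp : p < 1 / 2) (hc : 0 ≤ c)
    (hpc : 4 * p ≤ (1 + c) ^ 2) : StrictMonoOn (boundaryInS p) (Ico c 1) := by
  rintro s ⟨hcs, -⟩ t ⟨-, ht⟩ hst
  obtain ⟨k, hk, hdiff⟩ := boundaryInS_sub_boundaryInS_eq_pos_mul hp (hc.trans hcs) hst ht
  have : 4 * p < (1 + s) * (1 + t) := by nlinarith
  nlinarith

theorem strictAntiOn_boundaryInS {c : ℝ} (hp : p < 1 / 2) (hpc : (1 + c) ^ 2 ≤ 4 * p) :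
    StrictAntiOn (boundaryInS p) (Icc 0 c) := by
  rintro s ⟨hs, -⟩ t ⟨-, htc⟩ hst
  have hc : c < 1 := by nlinarith
  obtain ⟨k, hk, hdiff⟩ := boundaryInS_sub_boundaryInS_eq_pos_mul hp hs hst (htc.trans_lt hc)
  have : (1 + s) * (1 + t) < 4 * p := by nlinarith
  nlinarith

end BoundaryInS

section Substitution

variable {c δ : ℝ}

theorem sqrt_one_sub_div_lt_one (hc : 0 < c) (hδ : 0 < δ) : √(1 - c / δ) < 1 := by
  rw [Real.sqrt_lt' one_pos]
  have : 0 < c / δ := div_pos hc hδ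
  linarith

theorem strictMonoOn_sqrt_one_sub_div (hc : 0 < c) :
    StrictMonoOn (fun δ => √(1 - c / δ)) (Ici c) := by
  intro δ₁ (h₁ : c ≤ δ₁) δ₂ _ hlt
  have hδ₁ : 0 < δ₁ := hc.trans_le h₁
  apply Real.sqrt_lt_sqrt
  · rw [sub_nonneg, div_le_one hδ₁]
    exact h₁
  · have : c / δ₂ < c / δ₁ := div_lt_div_of_pos_left hc hδ₁ hlt
    linarith

theorem mapsTo_sqrt_one_sub_div (hc : 0 < c) :
    MapsTo (fun δ => √(1 - c / δ)) (Ici c) (Ico 0 1) :=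
  fun _ (h : c ≤ _) => ⟨Real.sqrt_nonneg _, sqrt_one_sub_div_lt_one hc (hc.trans_le h)⟩

end Substitution

theorem boundary_eq_boundaryInS {p δ : ℝ} (hp : p < 1 / 2) (hδ : 4 * (1 - p) ≤ δ) :
    δ ^ 2 / (2 * (1 - 2 * p)) * (1 + √(1 - 4 * (1 - p) / δ)) ^ 3
        / ((δ - 2) + δ * √(1 - 4 * (1 - p) / δ)) - 1
      = boundaryInS p √(1 - 4 * (1 - p) / δ) := by
  have hc : 0 < 4 * (1 - p) := by linarith
  have hδ0 : 0 < δ := hc.trans_le hδ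
  have hs2 : √(1 - 4 * (1 - p) / δ) ^ 2 = 1 - 4 * (1 - p) / δ :=
    Real.sq_sqrt (by rw [sub_nonneg, div_le_one hδ0]; exact hδ)
  obtain ⟨hs0, hs1⟩ : √(1 - 4 * (1 - p) / δ) ∈ Ico 0 1 := mapsTo_sqrt_one_sub_div hc hδ
  generalize √(1 - 4 * (1 - p) / δ) = s at hs0 hs1 hs2 ⊢
  have hδs : δ = 4 * (1 - p) / ((1 - s) * (1 + s)) := by
    have : δ * s ^ 2 = δ - 4 * (1 - p) := by rw [hs2]; field_simp
    rw [eq_div_iff (by nlinarith)]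
    linear_combination -this
  have h2p : 1 - 2 * p ≠ 0 := by linarith
  have hs1' : 1 - s ≠ 0 := by linarith
  have hs1'' : 1 + s ≠ 0 := by linarith
  have hs2p : 1 - 2 * p + s ≠ 0 := by linarith
  have hden : δ - 2 + δ * s = 2 * (1 - 2 * p + s) / (1 - s) := by
    rw [hδs]; field_simp; ring
  rw [hden, hδs]
  unfold boundaryInS
  field_simp
  ring

section CriticalPoint

variable {p : ℝ}

theorem le_one_add_inv_sqrt (hp : 0 < p) : 4 * (1 - p) ≤ 1 + 1 / √p := by
  obtain ⟨q, hq, rfl⟩ : ∃ q, 0 < q ∧ p = q ^ 2 :=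
    ⟨√p, Real.sqrt_pos.2 hp, (Real.sq_sqrt hp.le).symm⟩
  rw [Real.sqrt_sq hq.le, ← sub_nonneg]
  have : 1 + 1 / q - 4 * (1 - q ^ 2) = (q + 1) * (2 * q - 1) ^ 2 / q := by
    field_simp; ring
  rw [this]
  positivity

theorem sqrt_one_sub_div_one_add_inv_sqrt (hp : 1 / 4 ≤ p) :
    √(1 - 4 * (1 - p) / (1 + 1 / √p)) = 2 * √p - 1 := by
  obtain ⟨q, hq, rfl⟩ : ∃ q, 1 / 2 ≤ q ∧ p = q ^ 2 :=
    ⟨√p, Real.le_sqrt_of_sq_le (by linarith), (Real.sq_sqrt (by linarith)).symm⟩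
  have hq0 : 0 < q := by linarith
  rw [Real.sqrt_sq hq0.le]
  have : 1 - 4 * (1 - q ^ 2) / (1 + 1 / q) = (2 * q - 1) ^ 2 := by
    field_simp; ring
  rw [this, Real.sqrt_sq (by linarith)]

end CriticalPoint

end TemporaryAdoption

open TemporaryAdoption

/-- monotonicity properties of the stability-boundary function `F` of
the temporary adoption model: strictly increasing on `[4(1-p), ∞)` when `p < 1/4`;
strictly decreasing on `[4(1-p), 1 + 1/√p]` and strictly increasing on
`[1 + 1/√p, ∞)` when `1/4 ≤ p < 1/2`. -/
theorem stmt_18 (p : ℝ) (hp : p ∈ Set.Ioo (0:ℝ) (1/2)) :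
    let F : ℝ → ℝ := fun δ =>
      δ ^ 2 / (2 * (1 - 2 * p)) * (1 + Real.sqrt (1 - 4 * (1 - p) / δ)) ^ 3
        / ((δ - 2) + δ * Real.sqrt (1 - 4 * (1 - p) / δ)) - 1
    (p < 1 / 4 → StrictMonoOn F (Set.Ici (4 * (1 - p)))) ∧
    (1 / 4 ≤ p →
      StrictAntiOn F (Set.Icc (4 * (1 - p)) (1 + 1 / Real.sqrt p)) ∧
      StrictMonoOn F (Set.Ici (1 + 1 / Real.sqrt p))) := by
  intro F
  obtain ⟨hp0, hp2⟩ := hp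
  have hc : 0 < 4 * (1 - p) := by linarith
  have hS := strictMonoOn_sqrt_one_sub_div hc
  have hF : EqOn (boundaryInS p ∘ fun δ => √(1 - 4 * (1 - p) / δ)) F (Ici (4 * (1 - p))) :=
    fun δ hδ => (boundary_eq_boundaryInS hp2 hδ).symm
  refine ⟨fun hp4 => ((strictMonoOn_boundaryInS hp2 le_rfl (by linarith)).comp hS
    (mapsTo_sqrt_one_sub_div hc)).congr hF, fun hp4 => ?_⟩
  have hδc := le_one_add_inv_sqrt hp0
  have hSδc := sqrt_one_sub_div_one_add_inv_sqrt hp4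
  have hcrit : (1 + (2 * √p - 1)) ^ 2 = 4 * p := by
    rw [add_sub_cancel, mul_pow, Real.sq_sqrt hp0.le]; ring
  constructor
  · refine ((strictAntiOn_boundaryInS hp2 hcrit.le).comp_strictMonoOn
      (hS.mono Icc_subset_Ici_self) ?_).congr (hF.mono Icc_subset_Ici_self)
    rintro δ ⟨hδ, hδ'⟩
    exact ⟨Real.sqrt_nonneg _, hSδc ▸ hS.monotoneOn hδ hδc hδ'⟩
  · have hsub : Ici (1 + 1 / √p) ⊆ Ici (4 * (1 - p)) := Ici_subset_Ici.2 hδc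
    refine ((strictMonoOn_boundaryInS hp2 (hSδc ▸ Real.sqrt_nonneg _) hcrit.ge).comp
      (hS.mono hsub) ?_).congr (hF.mono hsub)
    intro δ (hδ : _ ≤ δ)
    exact ⟨hSδc ▸ hS.monotoneOn hδc (hδc.trans hδ) hδ,
      (mapsTo_sqrt_one_sub_div hc (hδc.trans hδ)).2⟩
end
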